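/- arXiv:1101.1138 — 2 statements merged into one kernel-verified Lean document; each statement's English description precedes it below -/
import Mathlib

section
/- Let θ : W → ℝ be a C² solution of Hess θ (V₁, V₁) = 0 on an open set W ⊆ ℝ², where V₁ = (cos θ, sin θ). If α : (−ε, ε) → W is an integral curve of V₁ with ∇_{V₁}θ(α(0)) = 0, then θ is constant along α and α is a straight line segment: α(s) = α(0) + s·V₁(α(0)) for all s. -/
/-!
Along an integral curve `α` of `V₁ = (cos θ, sin θ)`, the function `g = ∇_{V₁}θ ∘ α` is
the derivative of `θ ∘ α`, and differentiating once more gives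
`g' = Hess θ (V₁, V₁) + (∇_{V₂}θ) g = (∇_{V₂}θ) g`,
a linear ODE with continuous coefficient. Since `g 0 = 0`, uniqueness forces `g ≡ 0`;
thus `θ ∘ α` is constant, `α` has constant velocity `V₁(α 0)`, and `α` is a line.
-/

open Set Real

-- `V₁ = unitVec θ` and `V₂ = unitVec (θ + π / 2)`.
noncomputable def unitVec (φ : ℝ) : ℝ × ℝ := (cos φ, sin φ)

theorem hasDerivAt_unitVec (φ : ℝ) : HasDerivAt unitVec (unitVec (φ + π / 2)) φ := by
  rw [unitVec, cos_add_pi_div_two, sin_add_pi_div_two]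
  exact (hasDerivAt_cos φ).prodMk (hasDerivAt_sin φ)

theorem continuous_unitVec : Continuous unitVec :=
  continuous_cos.prodMk continuous_sin

section

variable {E : Type*} [NormedAddCommGroup E] [NormedSpace ℝ E]

theorem eqOn_zero_of_hasDerivAt_smul_self {c : ℝ → ℝ} {g : ℝ → E} {a b t₀ : ℝ}
    (hc : ContinuousOn c (Ioo a b)) (hg : ∀ t ∈ Ioo a b, HasDerivAt g (c t • g t) t)
    (ht₀ : t₀ ∈ Ioo a b) (hg₀ : g t₀ = 0) : EqOn g 0 (Ioo a b) := by
  intro t ht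
  -- `c` need not be bounded on `Ioo a b`, so we work on a compact subinterval around `t` and `t₀`.
  set a' := (a + min t t₀) / 2
  set b' := (b + max t t₀) / 2
  have hsub : Icc a' b' ⊆ Ioo a b := fun x hx => by
    constructor <;> grind [min_le_left t t₀, min_le_right t t₀, le_max_left t t₀]
  have ht' : t ∈ Icc a' b' := by
    constructor <;> grind [min_le_left t t₀, le_max_left t t₀]
  have ht₀' : t₀ ∈ Ioo a' b' := by
    constructor <;> grind [min_le_right t t₀, le_max_right t t₀]
  obtain ⟨K, hK⟩ := isCompact_Icc.exists_bound_of_continuousOn (hc.mono hsub)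
  have hLip : ∀ x ∈ Ioo a' b', LipschitzOnWith K.toNNReal (c x • · : E → E) univ := by
    intro x hx
    refine ((lipschitzWith_smul (c x)).weaken ?_).lipschitzOnWith
    rw [← NNReal.coe_le_coe, coe_nnnorm, Real.coe_toNNReal']
    exact (hK x (Ioo_subset_Icc_self hx)).trans (le_max_left K 0)
  exact ODE_solution_unique_of_mem_Icc (g := 0) hLip ht₀'
    (HasDerivAt.continuousOn fun x hx => hg x (hsub hx))
    (fun x hx => hg x (hsub (Ioo_subset_Icc_self hx))) (fun _ _ => mem_univ _)
    continuousOn_const (fun x _ => by simp)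
    (fun _ _ => mem_univ _) hg₀ ht'

theorem eqOn_add_smul_of_hasDerivAt_const {α : ℝ → E} {v : E} {a b t₀ : ℝ}
    (hα : ∀ t ∈ Ioo a b, HasDerivAt α v t) (ht₀ : t₀ ∈ Ioo a b) :
    EqOn α (fun t => α t₀ + (t - t₀) • v) (Ioo a b) := by
  have hline : ∀ t, HasDerivAt (fun t => α t₀ + (t - t₀) • v) v t := fun t => by
    simpa using (((hasDerivAt_id t).sub_const t₀).smul_const v).const_add (α t₀)
  refine isOpen_Ioo.eqOn_of_deriv_eq isPreconnected_Ioo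
    (fun t ht => (hα t ht).differentiableAt.differentiableWithinAt)
    (fun t _ => (hline t).differentiableAt.differentiableWithinAt)
    (fun t ht => ?_) ht₀ (by simp)
  rw [(hα t ht).deriv, (hline t).deriv]

end

theorem hasDerivAt_fderiv_unitVec_of_integralCurve {θ : ℝ × ℝ → ℝ} {α : ℝ → ℝ × ℝ} {s : ℝ}
    (hθ : ContDiffAt ℝ 2 θ (α s)) (hα : HasDerivAt α (unitVec (θ (α s))) s) :
    HasDerivAt (fun t => fderiv ℝ θ (α t) (unitVec (θ (α t))))
      (fderiv ℝ (fderiv ℝ θ) (α s) (unitVec (θ (α s))) (unitVec (θ (α s)))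
        + fderiv ℝ θ (α s) (unitVec (θ (α s) + π / 2))
          * fderiv ℝ θ (α s) (unitVec (θ (α s)))) s := by
  have hθα : HasDerivAt (fun t => θ (α t)) (fderiv ℝ θ (α s) (unitVec (θ (α s)))) s :=
    (hθ.differentiableAt two_ne_zero).hasFDerivAt.comp_hasDerivAt s hα
  have hDθ : HasDerivAt (fun t => fderiv ℝ θ (α t))
      (fderiv ℝ (fderiv ℝ θ) (α s) (unitVec (θ (α s)))) s :=
    ((hθ.fderiv_right (m := 1) le_rfl).differentiableAt one_ne_zero).hasFDerivAt.comp_hasDerivAt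
      s hα
  simpa only [Function.comp_apply, map_smul, smul_eq_mul, mul_comm] using
    hDθ.clm_apply ((hasDerivAt_unitVec _).scomp s hθα)

theorem integral_curve_is_line_general (W : Set (ℝ × ℝ)) (θ : ℝ × ℝ → ℝ)
    (hθ : ∀ p ∈ W, ContDiffAt ℝ 2 θ p)
    (hpde : ∀ p ∈ W,
      fderiv ℝ (fderiv ℝ θ) p (Real.cos (θ p), Real.sin (θ p))
        (Real.cos (θ p), Real.sin (θ p)) = 0)
    (ε : ℝ) (α : ℝ → ℝ × ℝ)
    (hα : ∀ s ∈ Set.Ioo (-ε) ε,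
      α s ∈ W ∧ HasDerivAt α (Real.cos (θ (α s)), Real.sin (θ (α s))) s)
    (h0 : fderiv ℝ θ (α 0) (Real.cos (θ (α 0)), Real.sin (θ (α 0))) = 0) :
    ∀ s ∈ Set.Ioo (-ε) ε,
      θ (α s) = θ (α 0)
      ∧ α s = α 0 + s • (Real.cos (θ (α 0)), Real.sin (θ (α 0))) := by
  intro s hs
  have hI : (0 : ℝ) ∈ Ioo (-ε) ε := ⟨by linarith [hs.1, hs.2], by linarith [hs.1, hs.2]⟩
  set g := fun t => fderiv ℝ θ (α t) (unitVec (θ (α t)))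
  set c := fun t => fderiv ℝ θ (α t) (unitVec (θ (α t) + π / 2))
  have hθα : ∀ t ∈ Ioo (-ε) ε, HasDerivAt (fun t => θ (α t)) (g t) t := fun t ht =>
    ((hθ _ (hα t ht).1).differentiableAt two_ne_zero).hasFDerivAt.comp_hasDerivAt t (hα t ht).2
  have hg' : ∀ t ∈ Ioo (-ε) ε, HasDerivAt g (c t • g t) t := fun t ht => by
    have hHess : fderiv ℝ (fderiv ℝ θ) (α t) (unitVec (θ (α t))) (unitVec (θ (α t))) = 0 :=
      hpde _ (hα t ht).1
    simpa [hHess] using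
      hasDerivAt_fderiv_unitVec_of_integralCurve (hθ _ (hα t ht).1) (hα t ht).2
  have hc : ContinuousOn c (Ioo (-ε) ε) := fun t ht => by
    have hDθ := ((hθ _ (hα t ht).1).continuousAt_fderiv two_ne_zero).comp
      (hα t ht).2.continuousAt
    have hV : ContinuousAt (fun t => unitVec (θ (α t) + π / 2)) t :=
      continuous_unitVec.continuousAt.comp ((hθα t ht).continuousAt.add continuousAt_const)
    exact (hDθ.clm_apply hV).continuousWithinAt
  have hg : EqOn g 0 (Ioo (-ε) ε) := eqOn_zero_of_hasDerivAt_smul_self hc hg' hI h0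
  have hθconst : ∀ t ∈ Ioo (-ε) ε, θ (α t) = θ (α 0) := fun t ht => by
    simpa using eqOn_add_smul_of_hasDerivAt_const (v := (0 : ℝ))
      (fun t ht => hg ht ▸ hθα t ht) hI ht
  have hline := eqOn_add_smul_of_hasDerivAt_const
    (fun t ht => hθconst t ht ▸ (hα t ht).2) hI hs
  exact ⟨hθconst s hs, by simpa using hline⟩

/-- If `θ` is a C² solution of `Hess θ(V₁,V₁) = 0` on an open set `W`, with
`V₁ = (cos θ, sin θ)`, and `α` is an integral curve of `V₁` with
`∇_{V₁}θ(α(0)) = 0`, then `θ` is constant along `α` and `α` is a straight line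
segment: `α(s) = α(0) + s • V₁(α(0))`. -/
theorem integral_curve_is_line (W : Set (ℝ × ℝ)) (hW : IsOpen W) (θ : ℝ × ℝ → ℝ)
    (hθ : ∀ p ∈ W, ContDiffAt ℝ 2 θ p)
    (hpde : ∀ p ∈ W,
      fderiv ℝ (fderiv ℝ θ) p (Real.cos (θ p), Real.sin (θ p))
        (Real.cos (θ p), Real.sin (θ p)) = 0)
    (ε : ℝ) (hε : 0 < ε) (α : ℝ → ℝ × ℝ)
    (hα : ∀ s ∈ Set.Ioo (-ε) ε,
      α s ∈ W ∧ HasDerivAt α (Real.cos (θ (α s)), Real.sin (θ (α s))) s)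
    (h0 : fderiv ℝ θ (α 0) (Real.cos (θ (α 0)), Real.sin (θ (α 0))) = 0) :
    ∀ s ∈ Set.Ioo (-ε) ε,
      θ (α s) = θ (α 0)
      ∧ α s = α 0 + s • (Real.cos (θ (α 0)), Real.sin (θ (α 0))) :=
  integral_curve_is_line_general W θ hθ hpde ε α hα h0
end

section
/- Let θ : ℝ² × [0,T) → ℝ be C² and X : (−ε,ε) × [0,T) → ℝ² be C² with X_s = V₁(X, t) := (cos θ(X,t), sin θ(X,t)). Define h(s,t) = ⟨X_t, V₂(X,t)⟩ − θ_s where V₂ = (−sin θ, cos θ) and θ_s = ∂_s[θ(X(s,t),t)]. If θ satisfies ∂θ/∂t = Hess_x θ(V₁,V₁) (spatial Hessian), then for each fixed t, ∂h/∂s = (∇_{V₂}θ)(X,t) · h, where ∇_{V₂}θ is the spatial directional derivative of θ along V₂. -/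
/-!
Along the curve `σ ↦ X(σ,t)` put `u = θ(X,t)`, so `V₁' = u_s V₂` and `V₂' = -u_s V₁`. By symmetry
of mixed partials, `∂_s X_t = ∂_t V₁(X,t) = (∇_{X_t}θ + θ_t) V₂`, while the chain rule gives
`u_ss = Hess θ(V₁,V₁) + u_s ∇_{V₂}θ`. In `∂_s h` the PDE cancels `θ_t` against the Hessian term, and
expanding `∇_{X_t}θ` in the frame `V₁, V₂` leaves `(⟨X_t,V₂⟩ - u_s) ∇_{V₂}θ = h ∇_{V₂}θ`.
-/

open Function Real

theorem HasDerivAt.fst {𝕜 E F : Type*} [NontriviallyNormedField 𝕜] [NormedAddCommGroup E]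
    [NormedSpace 𝕜 E] [NormedAddCommGroup F] [NormedSpace 𝕜 F] {f : 𝕜 → E × F} {f' : E × F}
    {x : 𝕜}
    (hf : HasDerivAt f f' x) : HasDerivAt (fun y => (f y).1) f'.1 x :=
  (ContinuousLinearMap.fst 𝕜 E F).hasFDerivAt.comp_hasDerivAt x hf

theorem HasDerivAt.snd {𝕜 E F : Type*} [NontriviallyNormedField 𝕜] [NormedAddCommGroup E]
    [NormedSpace 𝕜 E] [NormedAddCommGroup F] [NormedSpace 𝕜 F] {f : 𝕜 → E × F} {f' : E × F}
    {x : 𝕜}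
    (hf : HasDerivAt f f' x) : HasDerivAt (fun y => (f y).2) f'.2 x :=
  (ContinuousLinearMap.snd 𝕜 E F).hasFDerivAt.comp_hasDerivAt x hf

theorem HasDerivAt.cos_sin {f : ℝ → ℝ} {f' x : ℝ} (hf : HasDerivAt f f' x) :
    HasDerivAt (fun y => (Real.cos (f y), Real.sin (f y)))
      (f' • (-Real.sin (f x), Real.cos (f x))) x := by
  simpa [mul_comm] using hf.cos.prodMk hf.sin

theorem map_eq_sum_cos_sin_frame {M F : Type*} [AddCommGroup M] [Module ℝ M]
    [FunLike F (ℝ × ℝ) M] [LinearMapClass F ℝ (ℝ × ℝ) M] (L : F) (φ : ℝ) (v : ℝ × ℝ) :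
    L v = (v.1 * cos φ + v.2 * sin φ) • L (cos φ, sin φ)
      + (v.1 * -sin φ + v.2 * cos φ) • L (-sin φ, cos φ) := by
  rw [← map_smul, ← map_smul, ← map_add]
  congr 1
  simp only [Prod.smul_mk, smul_eq_mul, Prod.mk_add_mk]
  ext
  · linear_combination (-v.1) * sin_sq_add_cos_sq φ
  · linear_combination (-v.2) * sin_sq_add_cos_sq φ

section PartialDerivatives

variable {E G : Type*} [NormedAddCommGroup E] [NormedSpace ℝ E]
  [NormedAddCommGroup G] [NormedSpace ℝ G] {Θ : E → ℝ → G} {x : E} {t : ℝ}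

theorem HasFDerivAt.hasFDerivAt_uncurry_left {L : E × ℝ →L[ℝ] G}
    (hΘ : HasFDerivAt (uncurry Θ) L (x, t)) :
    HasFDerivAt (fun r => Θ r t) (L.comp (ContinuousLinearMap.inl ℝ E ℝ)) x :=
  hΘ.comp (f := fun r => (r, t)) x (hasFDerivAt_prodMk_left x t)

theorem HasFDerivAt.hasDerivAt_uncurry_right {L : E × ℝ →L[ℝ] G}
    (hΘ : HasFDerivAt (uncurry Θ) L (x, t)) : HasDerivAt (Θ x) (L (0, 1)) t :=
  hΘ.comp_hasDerivAt t ((hasDerivAt_const t x).prodMk (hasDerivAt_id t))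

theorem DifferentiableAt.hasDerivAt_uncurry_left {F : ℝ → ℝ → E} {s : ℝ}
    (hF : DifferentiableAt ℝ (uncurry F) (s, t)) :
    HasDerivAt (fun σ => F σ t) (deriv (fun σ => F σ t) s) s :=
  hF.hasFDerivAt.hasFDerivAt_uncurry_left.differentiableAt.hasDerivAt

theorem DifferentiableAt.hasDerivAt_uncurry_right (hΘ : DifferentiableAt ℝ (uncurry Θ) (x, t)) :
    HasDerivAt (Θ x) (deriv (Θ x) t) t :=
  hΘ.hasFDerivAt.hasDerivAt_uncurry_right.differentiableAt.hasDerivAt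

theorem DifferentiableAt.hasDerivAt_uncurry_comp {c : ℝ → E} {c' : E}
    (hΘ : DifferentiableAt ℝ (uncurry Θ) (c t, t)) (hc : HasDerivAt c c' t) :
    HasDerivAt (fun τ => Θ (c τ) τ)
      (fderiv ℝ (fun r => Θ r t) (c t) c' + deriv (Θ (c t)) t) t := by
  have hL := hΘ.hasFDerivAt
  have hsplit : ((c', 1) : E × ℝ) = (c', 0) + (0, 1) := by simp
  rw [hL.hasFDerivAt_uncurry_left.fderiv, hL.hasDerivAt_uncurry_right.deriv]
  have hcomp := hL.comp_hasDerivAt (f := fun τ => (c τ, τ)) t (hc.prodMk (hasDerivAt_id t))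
  rwa [hsplit, map_add] at hcomp

theorem ContDiff.hasDerivAt_deriv_swap {F : ℝ → ℝ → E} (hF : ContDiff ℝ 2 (uncurry F))
    (s t : ℝ) :
    HasDerivAt (fun σ => deriv (F σ) t) (deriv (fun τ => deriv (fun σ => F σ τ) s) t) s := by
  set D := fderiv ℝ (uncurry F)
  have hdiff : Differentiable ℝ (uncurry F) := hF.differentiable (by norm_num)
  have hD : HasFDerivAt (uncurry fun σ τ => D (σ, τ)) (fderiv ℝ D (s, t)) (s, t) :=
    ((hF.fderiv_right (m := 1) (by norm_num)).differentiable (by norm_num) _).hasFDerivAt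
  have hright : ∀ σ τ, deriv (F σ) τ = D (σ, τ) (0, 1) := fun σ τ =>
    (hdiff _).hasFDerivAt.hasDerivAt_uncurry_right.deriv
  have hleft : ∀ σ τ, deriv (fun ρ => F ρ τ) σ = D (σ, τ) (1, 0) := fun σ τ =>
    (hdiff _).hasFDerivAt.hasFDerivAt_uncurry_left.hasDerivAt.deriv
  have hsymm : fderiv ℝ D (s, t) (1, 0) (0, 1) = fderiv ℝ D (s, t) (0, 1) (1, 0) :=
    hF.contDiffAt.isSymmSndFDerivAt (by simp) _ _
  simp only [hright, hleft]
  rw [(hD.hasDerivAt_uncurry_right.clm_apply (hasDerivAt_const t _)).deriv, ← hsymm]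
  simpa using
    hD.hasFDerivAt_uncurry_left.hasDerivAt.clm_apply (hasDerivAt_const s ((0 : ℝ), (1 : ℝ)))

end PartialDerivatives

theorem ContDiff.hasDerivAt_deriv_comp {E G : Type*} [NormedAddCommGroup E] [NormedSpace ℝ E]
    [NormedAddCommGroup G] [NormedSpace ℝ G] {g : E → G} {c c' : ℝ → E} {c'' : E} {s : ℝ}
    (hg : ContDiff ℝ 2 g) (hc : ∀ σ, HasDerivAt c (c' σ) σ) (hc' : HasDerivAt c' c'' s) :
    HasDerivAt (deriv fun σ => g (c σ))
      (fderiv ℝ (fderiv ℝ g) (c s) (c' s) (c' s) + fderiv ℝ g (c s) c'') s := by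
  have hfirst : (deriv fun σ => g (c σ)) = fun σ => fderiv ℝ g (c σ) (c' σ) :=
    funext fun σ => ((hg.differentiable (by norm_num) _).hasFDerivAt.comp_hasDerivAt σ (hc σ)).deriv
  have hg' : DifferentiableAt ℝ (fderiv ℝ g) (c s) :=
    (hg.fderiv_right (m := 1) (by norm_num)).differentiable (by norm_num) _
  rw [hfirst]
  exact (hg'.hasFDerivAt.comp_hasDerivAt s (hc s)).clm_apply hc'

theorem hasDerivAt_deriv_of_deriv_eq_cos_sin {θ : ℝ × ℝ → ℝ → ℝ} {X : ℝ → ℝ → ℝ × ℝ}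
    (hθ : Differentiable ℝ (uncurry θ)) (hX : ContDiff ℝ 2 (uncurry X))
    (hXs : ∀ s t, deriv (fun σ => X σ t) s = (cos (θ (X s t) t), sin (θ (X s t) t)))
    (s t : ℝ) :
    HasDerivAt (fun σ => deriv (X σ) t)
      ((fderiv ℝ (fun r => θ r t) (X s t) (deriv (X s) t) + deriv (θ (X s t)) t)
        • (-sin (θ (X s t) t), cos (θ (X s t) t))) s := by
  have hswap := hX.hasDerivAt_deriv_swap s t
  have hXt := (hX.differentiable (by norm_num) (s, t)).hasDerivAt_uncurry_right
  simp only [hXs] at hswap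
  rwa [((hθ _).hasDerivAt_uncurry_comp hXt).cos_sin.deriv] at hswap

theorem h_ode_general (T : ℝ) (θ : ℝ × ℝ → ℝ → ℝ)
    (hθ : ContDiff ℝ 2 (fun q : (ℝ × ℝ) × ℝ => θ q.1 q.2))
    (X : ℝ → ℝ → ℝ × ℝ)
    (hX : ContDiff ℝ 2 (fun q : ℝ × ℝ => X q.1 q.2))
    (hXs : ∀ s t, deriv (fun σ => X σ t) s
      = (Real.cos (θ (X s t) t), Real.sin (θ (X s t) t)))
    (hpde : ∀ (p : ℝ × ℝ), ∀ t ∈ Set.Ico (0 : ℝ) T,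
      deriv (θ p) t
        = fderiv ℝ (fderiv ℝ (fun r => θ r t)) p (Real.cos (θ p t), Real.sin (θ p t))
            (Real.cos (θ p t), Real.sin (θ p t)))
    (h : ℝ → ℝ → ℝ)
    (hh : ∀ s t, h s t =
      (deriv (fun τ => X s τ) t).1 * (-Real.sin (θ (X s t) t))
        + (deriv (fun τ => X s τ) t).2 * Real.cos (θ (X s t) t)
        - deriv (fun σ => θ (X σ t) t) s)
    (s t : ℝ) (ht : t ∈ Set.Ico (0 : ℝ) T) :
    deriv (fun σ => h σ t) s
      = fderiv ℝ (fun r => θ r t) (X s t)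
          (-Real.sin (θ (X s t) t), Real.cos (θ (X s t) t)) * h s t := by
  have hθd : Differentiable ℝ (uncurry θ) := hθ.differentiable (by norm_num)
  have hg : ContDiff ℝ 2 fun r => θ r t := hθ.comp (contDiff_id.prodMk contDiff_const)
  have hXσ : ∀ σ, HasDerivAt (fun σ => X σ t) (cos (θ (X σ t) t), sin (θ (X σ t) t)) σ :=
    fun σ => hXs σ t ▸ (hX.differentiable (by norm_num) _).hasDerivAt_uncurry_left
  have hu : ∀ σ, HasDerivAt (fun σ => θ (X σ t) t)
      (fderiv ℝ (fun r => θ r t) (X σ t) (cos (θ (X σ t) t), sin (θ (X σ t) t))) σ :=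
    fun σ => (hg.differentiable (by norm_num) _).hasFDerivAt.comp_hasDerivAt σ (hXσ σ)
  have huu := hg.hasDerivAt_deriv_comp hXσ (hu s).cos_sin
  have hXst := hasDerivAt_deriv_of_deriv_eq_cos_sin hθd hX hXs s t
  have hhσ : (fun σ => h σ t) = fun σ => (deriv (X σ) t).1 * -sin (θ (X σ t) t)
      + (deriv (X σ) t).2 * cos (θ (X σ t) t) - deriv (fun σ => θ (X σ t) t) σ :=
    funext fun σ => hh σ t
  rw [hhσ]
  refine (((hXst.fst.mul (hu s).sin.neg).add (hXst.snd.mul (hu s).cos)).sub huu).deriv.trans ?_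
  rw [hh, (hu s).deriv, hpde (X s t) t ht]
  have hframe := map_eq_sum_cos_sin_frame (fderiv ℝ (fun r => θ r t) (X s t)) (θ (X s t) t)
    (deriv (X s) t)
  simp only [map_smul, smul_eq_mul, Prod.smul_fst, Prod.smul_snd, Pi.neg_apply] at hframe ⊢
  linear_combination (fderiv ℝ (fun r => θ r t) (X s t) (deriv (X s) t)
    + fderiv ℝ (fderiv ℝ fun r => θ r t) (X s t) (cos (θ (X s t) t), sin (θ (X s t) t))
      (cos (θ (X s t) t), sin (θ (X s t) t))) * sin_sq_add_cos_sq (θ (X s t) t) + hframe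

/-- For `h(s,t) = ⟨X_t, V₂(X,t)⟩ − θ_s`, if `θ` satisfies the PDE
`∂θ/∂t = Hess_x θ(V₁,V₁)` and `X_s = V₁(X,t)`, then for each fixed `t`,
`∂h/∂s = (∇_{V₂}θ)(X,t) · h`. -/
theorem h_ode (T ε : ℝ) (θ : ℝ × ℝ → ℝ → ℝ)
    (hθ : ContDiff ℝ 2 (fun q : (ℝ × ℝ) × ℝ => θ q.1 q.2))
    (X : ℝ → ℝ → ℝ × ℝ)
    (hX : ContDiff ℝ 2 (fun q : ℝ × ℝ => X q.1 q.2))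
    (hXs : ∀ s t, deriv (fun σ => X σ t) s
      = (Real.cos (θ (X s t) t), Real.sin (θ (X s t) t)))
    (hpde : ∀ (p : ℝ × ℝ), ∀ t ∈ Set.Ico (0 : ℝ) T,
      deriv (θ p) t
        = fderiv ℝ (fderiv ℝ (fun r => θ r t)) p (Real.cos (θ p t), Real.sin (θ p t))
            (Real.cos (θ p t), Real.sin (θ p t)))
    (h : ℝ → ℝ → ℝ)
    (hh : ∀ s t, h s t =
      (deriv (fun τ => X s τ) t).1 * (-Real.sin (θ (X s t) t))
        + (deriv (fun τ => X s τ) t).2 * Real.cos (θ (X s t) t)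
        - deriv (fun σ => θ (X σ t) t) s)
    (s t : ℝ) (hs : s ∈ Set.Ioo (-ε) ε) (ht : t ∈ Set.Ico (0 : ℝ) T) :
    deriv (fun σ => h σ t) s
      = fderiv ℝ (fun r => θ r t) (X s t)
          (-Real.sin (θ (X s t) t), Real.cos (θ (X s t) t)) * h s t :=
  h_ode_general T θ hθ X hX hXs hpde h hh s t ht
end
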